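/- arXiv:1401.4002 — 2 statements merged into one kernel-verified Lean document; each statement's English description precedes it below -/
import Mathlib

section
/- The cut rule is admissible for GL_Seq: if Γ, A and Γ, Ā are both derivable in GL_Seq, then Γ is derivable in GL_Seq. -/
/-- Modal formulas in negation normal form. -/
inductive Fml : Type where
  | pos : ℕ → Fml
  | neg : ℕ → Fml
  | top : Fml
  | bot : Fml
  | and : Fml → Fml → Fml
  | or : Fml → Fml → Fml
  | box : Fml → Fml
  | dia : Fml → Fml
  deriving DecidableEq

/-- De Morgan negation. -/
def Fml.negation : Fml → Fml
  | .pos n => .neg n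
  | .neg n => .pos n
  | .top => .bot
  | .bot => .top
  | .and A B => .or A.negation B.negation
  | .or A B => .and A.negation B.negation
  | .box A => .dia A.negation
  | .dia A => .box A.negation

def Fml.imp (A B : Fml) : Fml := .or A.negation B
def Fml.biimp (A B : Fml) : Fml := .and (A.imp B) (B.imp A)
def Fml.boxdot (A : Fml) : Fml := .and A (.box A)

/-- Boolean evaluation, with modal subformulas evaluated via `m` (diamonds dually). -/
def Fml.eval (v : ℕ → Bool) (m : Fml → Bool) : Fml → Bool
  | .pos n => v n
  | .neg n => !(v n)
  | .top => true
  | .bot => false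
  | .and A B => A.eval v m && B.eval v m
  | .or A B => A.eval v m || B.eval v m
  | .box A => m A
  | .dia A => !(m A.negation)

/-- Boolean tautologies. -/
def Fml.Taut (A : Fml) : Prop := ∀ v m, A.eval v m = true

/-- The Hilbert system for Gödel–Löb logic GLH. -/
inductive GLH : Fml → Prop where
  | taut (A) : A.Taut → GLH A
  | distr (A B) : GLH ((Fml.box (A.imp B)).imp ((Fml.box A).imp (Fml.box B)))
  | lob (A) : GLH ((Fml.box ((Fml.box A).imp A)).imp (Fml.box A))
  | mp (A B) : GLH (A.imp B) → GLH A → GLH B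
  | nec (A) : GLH A → GLH (Fml.box A)

/-- One-sided sequents: finite multisets of formulas. -/
abbrev Sequent := Multiset Fml

/-- Prefix every formula of a sequent with ◇. -/
def diaS (Γ : Sequent) : Sequent := Γ.map Fml.dia

def listSharp : List Fml → Fml
  | [] => .bot
  | [A] => A
  | A :: l => .or A (listSharp l)

/-- Γ^♯ : the disjunction of the formulas of Γ (⊥ if Γ is empty). -/
noncomputable def sharp (Γ : Sequent) : Fml := listSharp Γ.toList

def listConj : List Fml → Fml
  | [] => .top
  | [A] => A
  | A :: l => .and A (listConj l)

/-- The sequent calculus GL_Seq. -/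
inductive GLSeq : Sequent → Prop where
  | axA (Γ A) : GLSeq (A ::ₘ A.negation ::ₘ Γ)
  | axTop (Γ) : GLSeq (Fml.top ::ₘ Γ)
  | andR {Γ A B} : GLSeq (A ::ₘ Γ) → GLSeq (B ::ₘ Γ) → GLSeq (Fml.and A B ::ₘ Γ)
  | orR {Γ A B} : GLSeq (A ::ₘ B ::ₘ Γ) → GLSeq (Fml.or A B ::ₘ Γ)
  | boxGL {Γ Δ A} : GLSeq (A ::ₘ Fml.dia A.negation ::ₘ (Γ + diaS Γ)) →
      GLSeq (Fml.box A ::ₘ (diaS Γ + Δ))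

/-- One backward step of the K4-style rules: Γ is an initial sequent or the conclusion of
a rule all of whose premises lie in `S`. -/
def InfStep (S : Set Sequent) (Γ : Sequent) : Prop :=
  (∃ Δ A, Γ = A ::ₘ Fml.negation A ::ₘ Δ) ∨
  (∃ Δ, Γ = Fml.top ::ₘ Δ) ∨
  (∃ Δ A B, Γ = Fml.and A B ::ₘ Δ ∧ (A ::ₘ Δ) ∈ S ∧ (B ::ₘ Δ) ∈ S) ∨
  (∃ Δ A B, Γ = Fml.or A B ::ₘ Δ ∧ (A ::ₘ B ::ₘ Δ) ∈ S) ∨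
  (∃ Δ Θ A, Γ = Fml.box A ::ₘ (diaS Δ + Θ) ∧ (A ::ₘ (Δ + diaS Δ)) ∈ S)

/-- GL_∞ : Γ has a (possibly non-well-founded) proof in the K4-style system, coinductively:
Γ belongs to some set of sequents each of which is an initial sequent or the conclusion
of a rule with premises in the set. -/
def GLInf (Γ : Sequent) : Prop := ∃ S : Set Sequent, Γ ∈ S ∧ ∀ Δ ∈ S, InfStep S Δ

/-- Circular derivability relative to a history of ancestor sequents available for back-links. -/
inductive GLCircAux : List Sequent → Sequent → Prop where
  | axA (H Γ A) : GLCircAux H (A ::ₘ A.negation ::ₘ Γ)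
  | axTop (H Γ) : GLCircAux H (Fml.top ::ₘ Γ)
  | back {H Γ} : Γ ∈ H → GLCircAux H Γ
  | andR {H Γ A B} : GLCircAux ((Fml.and A B ::ₘ Γ) :: H) (A ::ₘ Γ) →
      GLCircAux ((Fml.and A B ::ₘ Γ) :: H) (B ::ₘ Γ) → GLCircAux H (Fml.and A B ::ₘ Γ)
  | orR {H Γ A B} : GLCircAux ((Fml.or A B ::ₘ Γ) :: H) (A ::ₘ B ::ₘ Γ) →
      GLCircAux H (Fml.or A B ::ₘ Γ)
  | boxR {H Γ Δ A} : GLCircAux ((Fml.box A ::ₘ (diaS Γ + Δ)) :: H) (A ::ₘ (Γ + diaS Γ)) →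
      GLCircAux H (Fml.box A ::ₘ (diaS Γ + Δ))

/-- GL_circ : circular proofs. -/
def GLCirc (Γ : Sequent) : Prop := GLCircAux [] Γ

/-- Circular derivations with assumption leaves. `CircDer H b hs bhs Γ` : a circular
derivation of Γ, with ancestor history `H`, `b` true iff a □-rule occurs on the path from
the root, non-boxed assumption leaves `hs` and boxed assumption leaves `bhs`. -/
inductive CircDer : List Sequent → Bool → List Sequent → List Sequent → Sequent → Prop where
  | axA (H b Γ A) : CircDer H b [] [] (A ::ₘ A.negation ::ₘ Γ)
  | axTop (H b Γ) : CircDer H b [] [] (Fml.top ::ₘ Γ)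
  | back {H Γ} (b) : Γ ∈ H → CircDer H b [] [] Γ
  | hypU (H Γ) : CircDer H false [Γ] [] Γ
  | hypB (H Γ) : CircDer H true [] [Γ] Γ
  | andR {H b Γ A B hs₁ bhs₁ hs₂ bhs₂} :
      CircDer ((Fml.and A B ::ₘ Γ) :: H) b hs₁ bhs₁ (A ::ₘ Γ) →
      CircDer ((Fml.and A B ::ₘ Γ) :: H) b hs₂ bhs₂ (B ::ₘ Γ) →
      CircDer H b (hs₁ ++ hs₂) (bhs₁ ++ bhs₂) (Fml.and A B ::ₘ Γ)
  | orR {H b Γ A B hs bhs} :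
      CircDer ((Fml.or A B ::ₘ Γ) :: H) b hs bhs (A ::ₘ B ::ₘ Γ) →
      CircDer H b hs bhs (Fml.or A B ::ₘ Γ)
  | boxR {H b Γ Δ A hs bhs} :
      CircDer ((Fml.box A ::ₘ (diaS Γ + Δ)) :: H) true hs bhs (A ::ₘ (Γ + diaS Γ)) →
      CircDer H b hs bhs (Fml.box A ::ₘ (diaS Γ + Δ))

/-- Propositional atoms occurring in a formula. -/
def Fml.atoms : Fml → Finset ℕ
  | .pos n => {n}
  | .neg n => {n}
  | .top => ∅
  | .bot => ∅
  | .and A B => A.atoms ∪ B.atoms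
  | .or A B => A.atoms ∪ B.atoms
  | .box A => A.atoms
  | .dia A => A.atoms

/-- All literals occurring in a formula (a literal is an atom with a polarity). -/
def Fml.lits : Fml → Finset (ℕ × Bool)
  | .pos n => {(n, true)}
  | .neg n => {(n, false)}
  | .top => ∅
  | .bot => ∅
  | .and A B => A.lits ∪ B.lits
  | .or A B => A.lits ∪ B.lits
  | .box A => A.lits
  | .dia A => A.lits

/-- u(A) : literals occurring outside the scope of all modal operators. -/
def Fml.uvoc : Fml → Finset (ℕ × Bool)
  | .pos n => {(n, true)}
  | .neg n => {(n, false)}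
  | .top => ∅
  | .bot => ∅
  | .and A B => A.uvoc ∪ B.uvoc
  | .or A B => A.uvoc ∪ B.uvoc
  | .box _ => ∅
  | .dia _ => ∅

/-- v(A) : literals occurring within the scope of a modal operator (to be marked). -/
def Fml.vvoc : Fml → Finset (ℕ × Bool)
  | .and A B => A.vvoc ∪ B.vvoc
  | .or A B => A.vvoc ∪ B.vvoc
  | .box A => A.lits
  | .dia A => A.lits
  | _ => ∅

/-- w(A) = u(A) ∪ v(A)°, where the second Boolean component marks literals. -/
def Fml.wvoc (A : Fml) : Finset ((ℕ × Bool) × Bool) :=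
  A.uvoc.image (fun L => (L, false)) ∪ A.vvoc.image (fun L => (L, true))

/-- w*(A) = w(A) ∪ w(A)°. -/
def Fml.wstar (A : Fml) : Finset ((ℕ × Bool) × Bool) :=
  A.wvoc ∪ A.wvoc.image (fun p => (p.1, true))

/-! ### Auxiliary development for cut admissibility (semantic proof) -/

theorem Fml.negation_negation (A : Fml) : A.negation.negation = A := by
  induction A <;> simp [Fml.negation, *]

/-- Transitive, converse well-founded, rooted Kripke models. -/
structure KM where
  W : Type
  r : W → W → Prop
  v : W → ℕ → Bool
  root : W
  trans : ∀ {a b c}, r a b → r b c → r a c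
  cwf : WellFounded (fun a b => r b a)
  rooted : ∀ x, x = root ∨ r root x

def KM.sat (M : KM) : M.W → Fml → Prop
  | w, .pos n => M.v w n = true
  | w, .neg n => ¬ (M.v w n = true)
  | _, .top => True
  | _, .bot => False
  | w, .and A B => M.sat w A ∧ M.sat w B
  | w, .or A B => M.sat w A ∨ M.sat w B
  | w, .box A => ∀ x, M.r w x → M.sat x A
  | w, .dia A => ∃ x, M.r w x ∧ M.sat x A

theorem KM.sat_negation (M : KM) (A : Fml) : ∀ w, (M.sat w A.negation ↔ ¬ M.sat w A) := by
  induction A with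
  | pos n => intro w; simp [Fml.negation, KM.sat]
  | neg n => intro w; simp [Fml.negation, KM.sat]
  | top => intro w; simp [Fml.negation, KM.sat]
  | bot => intro w; simp [Fml.negation, KM.sat]
  | and A B ihA ihB => intro w; simp [Fml.negation, KM.sat, ihA, ihB]; tauto
  | or A B ihA ihB => intro w; simp [Fml.negation, KM.sat, ihA, ihB]
  | box A ih => intro w; simp [Fml.negation, KM.sat, ih]
  | dia A ih =>
      intro w; simp only [Fml.negation, KM.sat, ih]
      constructor
      · rintro h ⟨x, hx, hsat⟩; exact h x hx hsat
      · intro h x hx hsat; exact h ⟨x, hx, hsat⟩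

/-- Soundness of GLSeq. -/
theorem GLSeq.sound {Γ : Sequent} (h : GLSeq Γ) :
    ∀ (M : KM) (w : M.W), ∃ A ∈ Γ, M.sat w A := by
  induction h with
  | axA Γ A =>
      intro M w
      by_cases hA : M.sat w A
      · exact ⟨A, by simp, hA⟩
      · exact ⟨A.negation, by simp, (M.sat_negation A w).2 hA⟩
  | axTop Γ =>
      intro M w; exact ⟨.top, by simp, trivial⟩
  | @andR Γ' A B h1 h2 ih1 ih2 =>
      intro M w
      obtain ⟨C, hC, hsat⟩ := ih1 M w
      rcases Multiset.mem_cons.1 hC with rfl | hC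
      · obtain ⟨D, hD, hsatD⟩ := ih2 M w
        rcases Multiset.mem_cons.1 hD with rfl | hD
        · exact ⟨Fml.and C D, by simp, show M.sat w C ∧ M.sat w D from ⟨hsat, hsatD⟩⟩
        · exact ⟨D, by simp [hD], hsatD⟩
      · exact ⟨C, by simp [hC], hsat⟩
  | @orR Γ' A B h ih =>
      intro M w
      obtain ⟨C, hC, hsat⟩ := ih M w
      rcases Multiset.mem_cons.1 hC with rfl | hC
      · exact ⟨Fml.or C B, by simp, Or.inl hsat⟩
      rcases Multiset.mem_cons.1 hC with rfl | hC
      · exact ⟨Fml.or A C, by simp, Or.inr hsat⟩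
      · exact ⟨C, by simp [hC], hsat⟩
  | @boxGL Γ Δ A h ih =>
      intro M w
      by_contra hcon
      push_neg at hcon
      have hbox : ¬ M.sat w (.box A) := hcon _ (by simp)
      have hdia : ∀ G ∈ Γ, ¬ M.sat w (.dia G) := by
        intro G hG
        exact hcon _ (by simp [diaS, Multiset.mem_map, hG])
      simp only [KM.sat, not_forall] at hbox
      obtain ⟨x0, hx0, hnx0⟩ := hbox
      obtain ⟨m, hm, hmax⟩ := M.cwf.has_min {x | M.r w x ∧ ¬ M.sat x A} ⟨x0, hx0, hnx0⟩
      obtain ⟨C, hC, hsat⟩ := ih M m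
      rcases Multiset.mem_cons.1 hC with rfl | hC
      · exact hm.2 hsat
      rcases Multiset.mem_cons.1 hC with rfl | hC
      · obtain ⟨u, hmu, hu⟩ := hsat
        have : ¬ M.sat u A := (M.sat_negation A u).1 hu
        exact hmax u ⟨M.trans hm.1 hmu, this⟩ hmu
      rcases Multiset.mem_add.1 hC with hC | hC
      · exact hdia C hC ⟨m, hm.1, hsat⟩
      · obtain ⟨G, hG, rfl⟩ := Multiset.mem_map.1 hC
        obtain ⟨u, hmu, hu⟩ := hsat
        exact hdia G hG ⟨u, M.trans hm.1 hmu, hu⟩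
section Combine

variable {ι : Type} (F : ι → KM)

/-- Accessibility relation of a tree of models glued under a fresh root. -/
inductive CR : (Unit ⊕ Σ i : ι, (F i).W) → (Unit ⊕ Σ i : ι, (F i).W) → Prop
  | rootstep (p) : CR (.inl ()) (.inr p)
  | lift (i) (x y : (F i).W) : (F i).r x y → CR (.inr ⟨i, x⟩) (.inr ⟨i, y⟩)

theorem CR_trans {a b c} (h1 : CR F a b) (h2 : CR F b c) : CR F a c := by
  cases h1 with
  | rootstep p =>
      cases h2 with
      | lift i x y h => exact .rootstep _
  | lift i x y h =>
      cases h2 with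
      | lift j y' z h' => exact .lift i x z ((F i).trans h h')

theorem CR_acc_inr (i : ι) (x : (F i).W) :
    Acc (fun a b => CR F b a) (.inr ⟨i, x⟩ : Unit ⊕ Σ i : ι, (F i).W) := by
  induction x using ((F i).cwf).induction with
  | _ x ih =>
    constructor
    intro y hy
    cases hy with
    | lift i x y h => exact ih _ h

/-- Glue a family of rooted models under a fresh root. -/
def KM.combine (v0 : ℕ → Bool) : KM where
  W := Unit ⊕ Σ i : ι, (F i).W
  r := CR F
  v := fun a n => match a with
    | .inl _ => v0 n
    | .inr p => (F p.1).v p.2 n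
  root := .inl ()
  trans := fun h1 h2 => CR_trans F h1 h2
  cwf := by
    constructor
    intro a
    cases a with
    | inr p => exact CR_acc_inr F p.1 p.2
    | inl u =>
        constructor
        intro y hy
        cases hy with
        | rootstep p => exact CR_acc_inr F p.1 p.2
  rooted := by
    intro a
    cases a with
    | inl u => exact Or.inl (by rfl)
    | inr p => exact Or.inr (.rootstep p)

theorem KM.sat_combine (v0 : ℕ → Bool) (C : Fml) :
    ∀ (i : ι) (x : (F i).W),
      (KM.combine F v0).sat (.inr ⟨i, x⟩) C ↔ (F i).sat x C := by
  induction C with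
  | pos n => intro i x; exact Iff.rfl
  | neg n => intro i x; exact Iff.rfl
  | top => intro i x; exact Iff.rfl
  | bot => intro i x; exact Iff.rfl
  | and A B ihA ihB => intro i x; exact and_congr (ihA i x) (ihB i x)
  | or A B ihA ihB => intro i x; exact or_congr (ihA i x) (ihB i x)
  | box A ih =>
      intro i x
      constructor
      · intro h y hy
        exact (ih i y).1 (h (.inr ⟨i, y⟩) (.lift i x y hy))
      · intro h z hz
        cases hz with
        | lift i x y hxy => exact (ih i y).2 (h y hxy)
  | dia A ih =>
      intro i x
      constructor
      · rintro ⟨z, hz, hsat⟩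
        cases hz with
        | lift i x y hxy => exact ⟨y, hxy, (ih i y).1 hsat⟩
      · rintro ⟨y, hy, hsat⟩
        exact ⟨.inr ⟨i, y⟩, .lift i x y hy, (ih i y).2 hsat⟩

end Combine
/-- Subformulas (including the formula itself). -/
def Fml.subf : Fml → Finset Fml
  | .and A B => insert (.and A B) (A.subf ∪ B.subf)
  | .or A B => insert (.or A B) (A.subf ∪ B.subf)
  | .box A => insert (.box A) A.subf
  | .dia A => insert (.dia A) A.subf
  | A => {A}

theorem Fml.mem_subf_self (A : Fml) : A ∈ A.subf := by
  cases A <;> simp [Fml.subf]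

theorem Fml.subf_subset_of_mem : ∀ {A C : Fml}, C ∈ A.subf → C.subf ⊆ A.subf := by
  intro A
  induction A with
  | and A B ihA ihB =>
      intro C hC
      simp only [Fml.subf, Finset.mem_insert, Finset.mem_union] at hC
      rcases hC with rfl | hC | hC
      · exact Finset.Subset.refl _
      · exact Finset.Subset.trans (ihA hC) (by intro x hx; simp [Fml.subf, hx])
      · exact Finset.Subset.trans (ihB hC) (by intro x hx; simp [Fml.subf, hx])
  | or A B ihA ihB =>
      intro C hC
      simp only [Fml.subf, Finset.mem_insert, Finset.mem_union] at hC
      rcases hC with rfl | hC | hC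
      · exact Finset.Subset.refl _
      · exact Finset.Subset.trans (ihA hC) (by intro x hx; simp [Fml.subf, hx])
      · exact Finset.Subset.trans (ihB hC) (by intro x hx; simp [Fml.subf, hx])
  | box A ihA =>
      intro C hC
      simp only [Fml.subf, Finset.mem_insert] at hC
      rcases hC with rfl | hC
      · exact Finset.Subset.refl _
      · exact Finset.Subset.trans (ihA hC) (by intro x hx; simp [Fml.subf, hx])
  | dia A ihA =>
      intro C hC
      simp only [Fml.subf, Finset.mem_insert] at hC
      rcases hC with rfl | hC
      · exact Finset.Subset.refl _
      · exact Finset.Subset.trans (ihA hC) (by intro x hx; simp [Fml.subf, hx])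
  | pos n => intro C hC; simp only [Fml.subf, Finset.mem_singleton] at hC; subst hC; exact Finset.Subset.refl _
  | neg n => intro C hC; simp only [Fml.subf, Finset.mem_singleton] at hC; subst hC; exact Finset.Subset.refl _
  | top => intro C hC; simp only [Fml.subf, Finset.mem_singleton] at hC; subst hC; exact Finset.Subset.refl _
  | bot => intro C hC; simp only [Fml.subf, Finset.mem_singleton] at hC; subst hC; exact Finset.Subset.refl _

theorem Fml.negation_mem_subf_negation : ∀ {A C : Fml}, C ∈ A.subf →
    C.negation ∈ A.negation.subf := by
  intro A
  induction A with
  | and A B ihA ihB =>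
      intro C hC
      simp only [Fml.subf, Finset.mem_insert, Finset.mem_union] at hC
      rcases hC with rfl | hC | hC
      · simp [Fml.negation, Fml.subf]
      · simp only [Fml.negation, Fml.subf, Finset.mem_insert, Finset.mem_union]
        exact Or.inr (Or.inl (ihA hC))
      · simp only [Fml.negation, Fml.subf, Finset.mem_insert, Finset.mem_union]
        exact Or.inr (Or.inr (ihB hC))
  | or A B ihA ihB =>
      intro C hC
      simp only [Fml.subf, Finset.mem_insert, Finset.mem_union] at hC
      rcases hC with rfl | hC | hC
      · simp [Fml.negation, Fml.subf]
      · simp only [Fml.negation, Fml.subf, Finset.mem_insert, Finset.mem_union]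
        exact Or.inr (Or.inl (ihA hC))
      · simp only [Fml.negation, Fml.subf, Finset.mem_insert, Finset.mem_union]
        exact Or.inr (Or.inr (ihB hC))
  | box A ihA =>
      intro C hC
      simp only [Fml.subf, Finset.mem_insert] at hC
      rcases hC with rfl | hC
      · simp [Fml.negation, Fml.subf]
      · simp only [Fml.negation, Fml.subf, Finset.mem_insert]
        exact Or.inr (ihA hC)
  | dia A ihA =>
      intro C hC
      simp only [Fml.subf, Finset.mem_insert] at hC
      rcases hC with rfl | hC
      · simp [Fml.negation, Fml.subf]
      · simp only [Fml.negation, Fml.subf, Finset.mem_insert]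
        exact Or.inr (ihA hC)
  | pos n => intro C hC; simp only [Fml.subf, Finset.mem_singleton] at hC; subst hC
             simp [Fml.negation, Fml.subf]
  | neg n => intro C hC; simp only [Fml.subf, Finset.mem_singleton] at hC; subst hC
             simp [Fml.negation, Fml.subf]
  | top => intro C hC; simp only [Fml.subf, Finset.mem_singleton] at hC; subst hC
           simp [Fml.negation, Fml.subf]
  | bot => intro C hC; simp only [Fml.subf, Finset.mem_singleton] at hC; subst hC
           simp [Fml.negation, Fml.subf]

/-- Weight of a formula (propositional connectives only). -/
def Fml.wt : Fml → ℕ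
  | .and A B => A.wt + B.wt + 1
  | .or A B => A.wt + B.wt + 1
  | _ => 1

def weight (Γ : Sequent) : ℕ := (Γ.map Fml.wt).sum

theorem weight_cons (A : Fml) (Γ : Sequent) : weight (A ::ₘ Γ) = A.wt + weight Γ := by
  simp [weight]

def Fml.isDia : Fml → Bool
  | .dia _ => true
  | _ => false

def Fml.undia : Fml → Fml
  | .dia A => A
  | A => A

theorem Fml.dia_undia {A : Fml} (h : A.isDia = true) : Fml.dia A.undia = A := by
  cases A <;> simp_all [Fml.isDia, Fml.undia]

/-- The multiset of dia-formulas of a sequent, as a Finset. -/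
def dF (Γ : Sequent) : Finset Fml := Γ.toFinset.filter (fun A => A.isDia = true)

/-- Top-level derivability helpers. -/
theorem GLSeq_of_top {Γ : Sequent} (h : Fml.top ∈ Γ) : GLSeq Γ := by
  rw [← Multiset.cons_erase h]; exact .axTop _

theorem GLSeq_of_clash {Γ : Sequent} {A : Fml} (h : A ∈ Γ)
    (h2 : A.negation ∈ Γ.erase A) : GLSeq Γ := by
  rw [← Multiset.cons_erase h, ← Multiset.cons_erase h2]
  exact .axA _ _
def Refutable (Γ : Sequent) : Prop :=
  ∃ M : KM, ∀ A ∈ Γ, ¬ M.sat M.root A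

theorem dF_subset_helper {Γ Γ₂ : Sequent} (h : ∀ x : Fml, x.isDia = true → x ∈ Γ → x ∈ Γ₂) :
    dF Γ ⊆ dF Γ₂ := by
  intro x hx
  simp only [dF, Finset.mem_filter, Multiset.mem_toFinset] at *
  exact ⟨h x hx.2 hx.1, hx.2⟩

theorem m1_le {Xd : Finset Fml} {Γ Γ₂ : Sequent} (h : dF Γ ⊆ dF Γ₂) :
    (Xd \ dF Γ₂).card ≤ (Xd \ dF Γ).card :=
  Finset.card_le_card (Finset.sdiff_subset_sdiff (Finset.Subset.refl _) h)

theorem search (X : Finset Fml)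
    (hsub : ∀ A ∈ X, A.subf ⊆ X)
    (hbox : ∀ A : Fml, Fml.box A ∈ X → Fml.dia A.negation ∈ X) :
    ∀ n₁ n₂ (Γ : Sequent), (∀ A ∈ Γ, A ∈ X) →
      ((X.filter (fun A => A.isDia = true)) \ dF Γ).card ≤ n₁ →
      weight Γ ≤ n₂ → GLSeq Γ ∨ Refutable Γ := by
  intro n₁
  induction n₁ using Nat.strong_induction_on with
  | _ n₁ ih₁ =>
  intro n₂
  induction n₂ using Nat.strong_induction_on with
  | _ n₂ ih₂ =>
  intro Γ hX hm1 hm2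
  set Xd := X.filter (fun A => A.isDia = true) with hXd
  by_cases htop : Fml.top ∈ Γ
  · exact Or.inl (GLSeq_of_top htop)
  by_cases hclash : ∃ A ∈ Γ, A.negation ∈ Γ.erase A
  · obtain ⟨A, hA, hA'⟩ := hclash
    exact Or.inl (GLSeq_of_clash hA hA')
  by_cases hand : ∃ A B, Fml.and A B ∈ Γ
  · obtain ⟨A, B, hAB⟩ := hand
    set Γ' := Γ.erase (Fml.and A B) with hΓ'def
    have hG : Γ = Fml.and A B ::ₘ Γ' := (Multiset.cons_erase hAB).symm
    have hXΓ' : ∀ C ∈ Γ', C ∈ X := fun C hC => hX C (Multiset.mem_of_mem_erase hC)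
    have hXA : A ∈ X := hsub _ (hX _ hAB) (by simp [Fml.subf, Fml.mem_subf_self])
    have hXB : B ∈ X := hsub _ (hX _ hAB) (by simp [Fml.subf, Fml.mem_subf_self])
    have hwΓ : weight Γ = (Fml.and A B).wt + weight Γ' := by rw [hG, weight_cons]
    have hdf : ∀ D : Fml, dF Γ ⊆ dF (D ::ₘ Γ') := by
      intro D
      apply dF_subset_helper
      intro x hx hxΓ
      rw [hG] at hxΓ
      rcases Multiset.mem_cons.1 hxΓ with rfl | h
      · simp [Fml.isDia] at hx
      · exact Multiset.mem_cons_of_mem h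
    have rec1 : GLSeq (A ::ₘ Γ') ∨ Refutable (A ::ₘ Γ') := by
      apply ih₂ (weight (A ::ₘ Γ')) _ _ _ ((m1_le (hdf A)).trans hm1) le_rfl
      · rw [weight_cons]
        calc A.wt + weight Γ' < (Fml.and A B).wt + weight Γ' := by
              simp only [Fml.wt]; omega
          _ ≤ n₂ := hwΓ ▸ hm2
      · intro C hC
        rcases Multiset.mem_cons.1 hC with rfl | h
        · exact hXA
        · exact hXΓ' _ h
    have rec2 : GLSeq (B ::ₘ Γ') ∨ Refutable (B ::ₘ Γ') := by
      apply ih₂ (weight (B ::ₘ Γ')) _ _ _ ((m1_le (hdf B)).trans hm1) le_rfl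
      · rw [weight_cons]
        calc B.wt + weight Γ' < (Fml.and A B).wt + weight Γ' := by
              simp only [Fml.wt]; omega
          _ ≤ n₂ := hwΓ ▸ hm2
      · intro C hC
        rcases Multiset.mem_cons.1 hC with rfl | h
        · exact hXB
        · exact hXΓ' _ h
    rcases rec1 with h1 | h1
    · rcases rec2 with h2 | h2
      · exact Or.inl (hG ▸ GLSeq.andR h1 h2)
      · refine Or.inr ?_
        obtain ⟨M, hM⟩ := h2
        refine ⟨M, ?_⟩
        intro C hC
        rw [hG] at hC
        rcases Multiset.mem_cons.1 hC with rfl | h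
        · intro hs
          have hs' : M.sat M.root A ∧ M.sat M.root B := hs
          exact hM B (Multiset.mem_cons_self _ _) hs'.2
        · exact hM C (Multiset.mem_cons_of_mem h)
    · refine Or.inr ?_
      obtain ⟨M, hM⟩ := h1
      refine ⟨M, ?_⟩
      intro C hC
      rw [hG] at hC
      rcases Multiset.mem_cons.1 hC with rfl | h
      · intro hs
        have hs' : M.sat M.root A ∧ M.sat M.root B := hs
        exact hM A (Multiset.mem_cons_self _ _) hs'.1
      · exact hM C (Multiset.mem_cons_of_mem h)
  by_cases hor : ∃ A B, Fml.or A B ∈ Γ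
  · obtain ⟨A, B, hAB⟩ := hor
    set Γ' := Γ.erase (Fml.or A B) with hΓ'def
    have hG : Γ = Fml.or A B ::ₘ Γ' := (Multiset.cons_erase hAB).symm
    have hXΓ' : ∀ C ∈ Γ', C ∈ X := fun C hC => hX C (Multiset.mem_of_mem_erase hC)
    have hXA : A ∈ X := hsub _ (hX _ hAB) (by simp [Fml.subf, Fml.mem_subf_self])
    have hXB : B ∈ X := hsub _ (hX _ hAB) (by simp [Fml.subf, Fml.mem_subf_self])
    have hwΓ : weight Γ = (Fml.or A B).wt + weight Γ' := by rw [hG, weight_cons]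
    have hdf : dF Γ ⊆ dF (A ::ₘ B ::ₘ Γ') := by
      apply dF_subset_helper
      intro x hx hxΓ
      rw [hG] at hxΓ
      rcases Multiset.mem_cons.1 hxΓ with rfl | h
      · simp [Fml.isDia] at hx
      · exact Multiset.mem_cons_of_mem (Multiset.mem_cons_of_mem h)
    have rec1 : GLSeq (A ::ₘ B ::ₘ Γ') ∨ Refutable (A ::ₘ B ::ₘ Γ') := by
      apply ih₂ (weight (A ::ₘ B ::ₘ Γ')) _ _ _ ((m1_le hdf).trans hm1) le_rfl
      · rw [weight_cons, weight_cons]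
        calc A.wt + (B.wt + weight Γ') < (Fml.or A B).wt + weight Γ' := by
              simp only [Fml.wt]; omega
          _ ≤ n₂ := hwΓ ▸ hm2
      · intro C hC
        rcases Multiset.mem_cons.1 hC with rfl | h
        · exact hXA
        rcases Multiset.mem_cons.1 h with rfl | h
        · exact hXB
        · exact hXΓ' _ h
    rcases rec1 with h1 | h1
    · exact Or.inl (hG ▸ GLSeq.orR h1)
    · refine Or.inr ?_
      obtain ⟨M, hM⟩ := h1
      refine ⟨M, ?_⟩
      intro C hC
      rw [hG] at hC
      rcases Multiset.mem_cons.1 hC with rfl | h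
      · intro hs
        have hs' : M.sat M.root A ∨ M.sat M.root B := hs
        rcases hs' with hs' | hs'
        · exact hM A (Multiset.mem_cons_self _ _) hs'
        · exact hM B (Multiset.mem_cons_of_mem (Multiset.mem_cons_self _ _)) hs'
      · exact hM C (Multiset.mem_cons_of_mem (Multiset.mem_cons_of_mem h))
  -- residual case
  · set Γd := Γ.filter (fun A => A.isDia = true) with hΓd
    set Θ₀ := Γ.filter (fun A => ¬ (A.isDia = true)) with hΘ₀
    have hsplit : Γd + Θ₀ = Γ := Multiset.filter_add_not _ Γ
    set Δ := Γd.map Fml.undia with hΔ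
    have hdiaS : diaS Δ = Γd := by
      rw [hΔ, diaS, Multiset.map_map]
      calc Γd.map (Fml.dia ∘ Fml.undia) = Γd.map id := by
            apply Multiset.map_congr rfl
            intro x hx
            simp only [Function.comp, id]
            exact Fml.dia_undia (Multiset.mem_filter.1 hx).2
        _ = Γd := Multiset.map_id _
    have hΔmem : ∀ E ∈ Δ, Fml.dia E ∈ Γ := by
      intro E hE
      obtain ⟨x, hx, rfl⟩ := Multiset.mem_map.1 hE
      have := Fml.dia_undia (Multiset.mem_filter.1 hx).2
      rw [this]
      exact (Multiset.mem_filter.1 hx).1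
    set P : Fml → Sequent := fun A => A ::ₘ Fml.dia A.negation ::ₘ (Δ + diaS Δ) with hP
    by_cases hder : ∃ A, Fml.box A ∈ Γ ∧ GLSeq (P A)
    · obtain ⟨A, hA, hPA⟩ := hder
      have hAΘ : Fml.box A ∈ Θ₀ := Multiset.mem_filter.2 ⟨hA, by simp [Fml.isDia]⟩
      set Θ := Θ₀.erase (Fml.box A) with hΘ
      have hG : Γ = Fml.box A ::ₘ (diaS Δ + Θ) := by
        rw [hdiaS, ← hsplit, ← Multiset.cons_erase hAΘ, Multiset.add_cons]
      rw [hG]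
      exact Or.inl (GLSeq.boxGL hPA)
    · push_neg at hder
      right
      have hrefut : ∀ p : {A : Fml // Fml.box A ∈ Γ},
          ∃ M : KM, ∀ C ∈ P p.1, ¬ M.sat M.root C := by
        rintro ⟨A, hA⟩
        have hnin : Fml.dia A.negation ∉ Γ := by
          intro hin
          apply hder A hA
          have hdin : Fml.dia A.negation ∈ Γd :=
            Multiset.mem_filter.2 ⟨hin, by simp [Fml.isDia]⟩
          have hnΔ : A.negation ∈ Δ := by
            rw [hΔ]
            exact Multiset.mem_map.2 ⟨Fml.dia A.negation, hdin, rfl⟩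
          have h1 : Δ + diaS Δ = A.negation ::ₘ (Δ.erase A.negation + diaS Δ) := by
            exact (congrArg (· + diaS Δ) (Multiset.cons_erase hnΔ)).symm.trans
              (Multiset.cons_add _ _ _)
          have h2 : P A = A ::ₘ A.negation ::ₘ
              (Fml.dia A.negation ::ₘ (Δ.erase A.negation + diaS Δ)) := by
            show (A ::ₘ Fml.dia A.negation ::ₘ (Δ + diaS Δ)) = _
            rw [h1]
            exact congrArg (A ::ₘ ·) (Multiset.cons_swap _ _ _)
          rw [h2]
          exact GLSeq.axA _ _
        have hXP : ∀ C ∈ P A, C ∈ X := by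
          intro C hC
          rcases Multiset.mem_cons.1 hC with rfl | hC
          · exact hsub _ (hX _ hA) (by simp [Fml.subf, Fml.mem_subf_self])
          rcases Multiset.mem_cons.1 hC with rfl | hC
          · exact hbox A (hX _ hA)
          rcases Multiset.mem_add.1 hC with hC | hC
          · exact hsub _ (hX _ (hΔmem _ hC)) (by simp [Fml.subf, Fml.mem_subf_self])
          · rw [hdiaS] at hC
            exact hX _ ((Multiset.mem_filter.1 hC).1)
        have hdfP : dF Γ ⊆ dF (P A) := by
          apply dF_subset_helper
          intro x hx hxΓ
          have : x ∈ Γd := Multiset.mem_filter.2 ⟨hxΓ, hx⟩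
          rw [← hdiaS] at this
          exact Multiset.mem_cons_of_mem (Multiset.mem_cons_of_mem
            (Multiset.mem_add.2 (Or.inr this)))
        have hnewdF : Fml.dia A.negation ∈ dF (P A) := by
          refine Finset.mem_filter.2 ⟨Multiset.mem_toFinset.2 ?_, by simp [Fml.isDia]⟩
          exact Multiset.mem_cons_of_mem (Multiset.mem_cons_self _ _)
        have hnotdF : Fml.dia A.negation ∉ dF Γ := by
          intro h
          exact hnin (Multiset.mem_toFinset.1 (Finset.mem_filter.1 h).1)
        have hXdmem : Fml.dia A.negation ∈ Xd :=
          Finset.mem_filter.2 ⟨hbox A (hX _ hA), by simp [Fml.isDia]⟩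
        have hcard : (Xd \ dF (P A)).card < (Xd \ dF Γ).card := by
          apply Finset.card_lt_card
          constructor
          · exact Finset.sdiff_subset_sdiff (Finset.Subset.refl _) hdfP
          · intro hss
            have h1 : Fml.dia A.negation ∈ Xd \ dF Γ := Finset.mem_sdiff.2 ⟨hXdmem, hnotdF⟩
            have h2 := hss h1
            exact (Finset.mem_sdiff.1 h2).2 hnewdF
        have := ih₁ ((Xd \ dF (P A)).card) (lt_of_lt_of_le hcard hm1)
          (weight (P A)) (P A) hXP le_rfl le_rfl
        rcases this with h | h
        · exact absurd h (hder A hA)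
        · exact h
      choose MF hMF using hrefut
      set v0 : ℕ → Bool := fun n => if Fml.neg n ∈ Γ then true else false with hv0
      refine ⟨KM.combine MF v0, ?_⟩
      intro C hC hsat
      cases C with
      | pos n =>
          have hv : v0 n = true := hsat
          have hneg : Fml.neg n ∈ Γ := by
            by_contra h
            rw [hv0] at hv
            simp [h] at hv
          apply hclash
          refine ⟨Fml.pos n, hC, ?_⟩
          rw [Multiset.mem_erase_of_ne (by simp [Fml.negation])]
          exact hneg
      | neg n =>
          apply hsat
          show v0 n = true
          rw [hv0]
          simp [hC]
      | top => exact htop hC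
      | bot => exact hsat
      | and A B => exact hand ⟨A, B, hC⟩
      | or A B => exact hor ⟨A, B, hC⟩
      | box A =>
          set i : {A : Fml // Fml.box A ∈ Γ} := ⟨A, hC⟩ with hi
          have hsat' := hsat (.inr ⟨i, (MF i).root⟩) (CR.rootstep _)
          have := (KM.sat_combine MF v0 A i (MF i).root).1 hsat'
          exact hMF i A (Multiset.mem_cons_self _ _) this
      | dia E =>
          obtain ⟨x, hx, hsatE⟩ := hsat
          have hEΔ : E ∈ Δ := by
            have hdE : Fml.dia E ∈ Γd := Multiset.mem_filter.2 ⟨hC, by simp [Fml.isDia]⟩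
            rw [hΔ]
            exact Multiset.mem_map.2 ⟨Fml.dia E, hdE, rfl⟩
          cases hx with
          | rootstep p =>
              obtain ⟨i, w⟩ := p
              have hsE : (MF i).sat w E := (KM.sat_combine MF v0 E i w).1 hsatE
              rcases (MF i).rooted w with rfl | hr
              · refine hMF i E ?_ hsE
                exact Multiset.mem_cons_of_mem (Multiset.mem_cons_of_mem
                  (Multiset.mem_add.2 (Or.inl hEΔ)))
              · have hdia : ¬ (MF i).sat (MF i).root (Fml.dia E) := by
                  apply hMF i (Fml.dia E)
                  refine Multiset.mem_cons_of_mem (Multiset.mem_cons_of_mem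
                    (Multiset.mem_add.2 (Or.inr ?_)))
                  rw [hdiaS]
                  exact Multiset.mem_filter.2 ⟨hC, by simp [Fml.isDia]⟩
                exact hdia ⟨w, hr, hsE⟩
theorem GLSeq_cut (Γ : Sequent) (A : Fml) (h₁ : GLSeq (A ::ₘ Γ))
    (h₂ : GLSeq (A.negation ::ₘ Γ)) : GLSeq Γ := by
  by_contra hn
  set X := Γ.toFinset.biUnion (fun C => C.subf ∪ C.negation.subf) with hXdef
  have hmemX : ∀ {D C : Fml}, C ∈ Γ → D ∈ C.subf ∪ C.negation.subf → D ∈ X := by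
    intro D C hC hD
    exact Finset.mem_biUnion.2 ⟨C, Multiset.mem_toFinset.2 hC, hD⟩
  have hsub : ∀ B ∈ X, B.subf ⊆ X := by
    intro B hB D hD
    obtain ⟨C, hC, hBC⟩ := Finset.mem_biUnion.1 hB
    rcases Finset.mem_union.1 hBC with h | h
    · exact hmemX (Multiset.mem_toFinset.1 hC)
        (Finset.mem_union_left _ (Fml.subf_subset_of_mem h hD))
    · exact hmemX (Multiset.mem_toFinset.1 hC)
        (Finset.mem_union_right _ (Fml.subf_subset_of_mem h hD))
  have hbox : ∀ B : Fml, Fml.box B ∈ X → Fml.dia B.negation ∈ X := by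
    intro B hB
    obtain ⟨C, hC, hBC⟩ := Finset.mem_biUnion.1 hB
    rcases Finset.mem_union.1 hBC with h | h
    · have := Fml.negation_mem_subf_negation h
      exact hmemX (Multiset.mem_toFinset.1 hC) (Finset.mem_union_right _ this)
    · have := Fml.negation_mem_subf_negation h
      rw [Fml.negation_negation] at this
      exact hmemX (Multiset.mem_toFinset.1 hC) (Finset.mem_union_left _ this)
  have hXΓ : ∀ B ∈ Γ, B ∈ X := by
    intro B hB
    exact hmemX hB (Finset.mem_union_left _ (Fml.mem_subf_self B))
  rcases search X hsub hbox _ _ Γ hXΓ le_rfl le_rfl with h | ⟨M, hM⟩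
  · exact hn h
  · have hA : M.sat M.root A := by
      obtain ⟨C, hC, hsat⟩ := h₁.sound M M.root
      rcases Multiset.mem_cons.1 hC with rfl | hC
      · exact hsat
      · exact absurd hsat (hM C hC)
    have hA' : M.sat M.root A.negation := by
      obtain ⟨C, hC, hsat⟩ := h₂.sound M M.root
      rcases Multiset.mem_cons.1 hC with rfl | hC
      · exact hsat
      · exact absurd hsat (hM C hC)
    exact (M.sat_negation A M.root).1 hA' hA
end

section
/- The three systems are equivalent: a sequent Γ is derivable in GL_Seq if and only if it has an ∞-proof in GL_∞, if and only if it has a circular proof in GL_circ. -/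
/-! All three systems are sound and complete for Kripke models on transitive, conversely
well-founded frames. Soundness of the GL-rule and of ∞-proofs is proved by induction along the
converse of the accessibility relation, and a circular proof unfolds into an ∞-proof by replacing
each back-link with the derivation of its target. For completeness, a valid sequent is always an
initial sequent or the conclusion of a rule with valid premises: if every □-premise had a
countermodel, these glued below a new root would refute the sequent. Iterating this inside the
finite Fischer–Ladner closure of the sequent gives a `GLSeq` proof, terminating because each
GL-step adds a new ◇-formula, and a finite set of sequents closed under K4-steps, which folds into
a circular proof. -/

namespace Fml

def size : Fml → ℕ
  | .and A B => A.size + B.size + 1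
  | .or A B => A.size + B.size + 1
  | .box A => A.size + 1
  | .dia A => A.size + 1
  | _ => 1

theorem one_le_size (A : Fml) : 1 ≤ A.size := by
  cases A <;> simp [size]

@[simp]
theorem negation_negation_s16 (A : Fml) : A.negation.negation = A := by
  induction A <;> simp [negation, *]

theorem dia_injective : Function.Injective Fml.dia := fun _ _ h => by injection h

end Fml

def seqSize (Δ : Sequent) : ℕ := (Δ.map Fml.size).sum

@[simp]
theorem seqSize_cons (A : Fml) (Δ : Sequent) : seqSize (A ::ₘ Δ) = A.size + seqSize Δ := by
  simp [seqSize]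

@[simp]
theorem seqSize_add (Δ Θ : Sequent) : seqSize (Δ + Θ) = seqSize Δ + seqSize Θ := by
  simp [seqSize]

theorem card_le_seqSize (Δ : Sequent) : Multiset.card Δ ≤ seqSize Δ := by
  have := Multiset.card_nsmul_le_sum (s := Δ.map Fml.size) (a := 1) (by simp [Fml.one_le_size])
  simpa [seqSize] using this

theorem seqSize_le_sum_size {Δ : Sequent} {C : Finset Fml} (hΔ : Δ.Nodup) (hC : ∀ A ∈ Δ, A ∈ C) :
    seqSize Δ ≤ ∑ A ∈ C, A.size := calc
  seqSize Δ = ∑ A ∈ Δ.toFinset, A.size := by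
    rw [seqSize, ← Finset.sum_map_val, Multiset.toFinset_val, Multiset.dedup_eq_self.2 hΔ]
  _ ≤ ∑ A ∈ C, A.size := Finset.sum_le_sum_of_subset fun A hA => hC A (Multiset.mem_toFinset.1 hA)

structure GLModel where
  World : Type
  R : World → World → Prop
  val : World → ℕ → Prop
  trans : ∀ {u v w}, R u v → R v w → R u w
  wf : WellFounded (flip R)

namespace GLModel

def Sat (M : GLModel) : Fml → M.World → Prop
  | .pos n, w => M.val w n
  | .neg n, w => ¬ M.val w n
  | .top, _ => True
  | .bot, _ => False
  | .and A B, w => Sat M A w ∧ Sat M B w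
  | .or A B, w => Sat M A w ∨ Sat M B w
  | .box A, w => ∀ v, M.R w v → Sat M A v
  | .dia A, w => ∃ v, M.R w v ∧ Sat M A v

def SatSeq (M : GLModel) (w : M.World) (Δ : Sequent) : Prop := ∃ A ∈ Δ, M.Sat A w

variable {M : GLModel}

theorem sat_negation (A : Fml) (w : M.World) : M.Sat A.negation w ↔ ¬ M.Sat A w := by
  induction A generalizing w <;> simp [Fml.negation, Sat, *]
  tauto

theorem SatSeq.mono {w : M.World} {Δ Δ' : Sequent} (h : M.SatSeq w Δ) (hle : Δ ≤ Δ') :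
    M.SatSeq w Δ' :=
  let ⟨A, hA, hAw⟩ := h; ⟨A, Multiset.mem_of_le hle hA, hAw⟩

@[simp]
theorem satSeq_cons {w : M.World} {A : Fml} {Δ : Sequent} :
    M.SatSeq w (A ::ₘ Δ) ↔ M.Sat A w ∨ M.SatSeq w Δ := by
  simp [SatSeq]

theorem satSeq_axA (w : M.World) (A : Fml) (Δ : Sequent) :
    M.SatSeq w (A ::ₘ A.negation ::ₘ Δ) := by
  simp only [satSeq_cons, sat_negation]
  tauto

theorem satSeq_and {w : M.World} {A B : Fml} {Δ : Sequent} :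
    M.SatSeq w (.and A B ::ₘ Δ) ↔ M.SatSeq w (A ::ₘ Δ) ∧ M.SatSeq w (B ::ₘ Δ) := by
  simp only [satSeq_cons, Sat, and_or_right]

theorem satSeq_or {w : M.World} {A B : Fml} {Δ : Sequent} :
    M.SatSeq w (.or A B ::ₘ Δ) ↔ M.SatSeq w (A ::ₘ B ::ₘ Δ) := by
  simp only [satSeq_cons, Sat, or_assoc]

theorem satSeq_box_diaS {w : M.World} {A : Fml} {Γ : Sequent}
    (h : ∀ v, M.R w v → M.SatSeq v (A ::ₘ (Γ + diaS Γ))) : M.SatSeq w (.box A ::ₘ diaS Γ) := by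
  by_cases hA : M.Sat (.box A) w
  · exact satSeq_cons.2 (.inl hA)
  obtain ⟨v, hwv, hvA⟩ : ∃ v, M.R w v ∧ ¬ M.Sat A v := by simpa [Sat] using hA
  obtain ⟨B, hB, hvB⟩ := h v hwv
  simp only [diaS, Multiset.mem_cons, Multiset.mem_add, Multiset.mem_map] at hB
  rcases hB with rfl | hB | ⟨B, hB, rfl⟩
  · exact absurd hvB hvA
  · exact ⟨.dia B, by simp [diaS, hB], v, hwv, hvB⟩
  · obtain ⟨u, hvu, hu⟩ := hvB
    exact ⟨.dia B, by simp [diaS, hB], u, M.trans hwv hvu, hu⟩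

end GLModel

open GLModel

def Valid (Δ : Sequent) : Prop := ∀ (M : GLModel) (w : M.World), M.SatSeq w Δ

theorem Valid.mono {Δ Δ' : Sequent} (h : Valid Δ) (hle : Δ ≤ Δ') : Valid Δ' :=
  fun M w => (h M w).mono hle

theorem valid_and {A B : Fml} {Δ : Sequent} :
    Valid (.and A B ::ₘ Δ) ↔ Valid (A ::ₘ Δ) ∧ Valid (B ::ₘ Δ) := by
  simp only [Valid, satSeq_and, forall_and]

theorem valid_or {A B : Fml} {Δ : Sequent} :
    Valid (.or A B ::ₘ Δ) ↔ Valid (A ::ₘ B ::ₘ Δ) := by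
  simp only [Valid, satSeq_or]

/-- By induction along the converse of `R`: a `◇Ā`-witness above `v` contradicts `□A` at `v`. -/
theorem valid_boxGL {A : Fml} {Γ Δ : Sequent}
    (h : Valid (A ::ₘ .dia A.negation ::ₘ (Γ + diaS Γ))) : Valid (.box A ::ₘ (diaS Γ + Δ)) := by
  intro M w
  refine SatSeq.mono ?_ (Multiset.cons_le_cons _ (Multiset.le_add_right _ _))
  induction w using M.wf.induction with
  | _ w ih =>
  refine satSeq_box_diaS fun v hwv => ?_
  rcases satSeq_cons.1 (h M v) with hA | hrest
  · exact satSeq_cons.2 (.inl hA)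
  rcases satSeq_cons.1 hrest with ⟨u, hvu, hu⟩ | hΓ
  · rcases satSeq_cons.1 (ih v hwv) with hbox | hdia
    · exact absurd (hbox u hvu) ((sat_negation A u).1 hu)
    · exact satSeq_cons.2 (.inr (hdia.mono (Multiset.le_add_left _ _)))
  · exact satSeq_cons.2 (.inr hΓ)

theorem GLSeq.valid {Γ : Sequent} (h : GLSeq Γ) : Valid Γ := by
  induction h with
  | axA Γ A => exact fun M w => satSeq_axA w A Γ
  | axTop Γ => exact fun M w => satSeq_cons.2 (.inl trivial)
  | andR _ _ ihA ihB => exact valid_and.2 ⟨ihA, ihB⟩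
  | orR _ ih => exact valid_or.2 ih
  | boxGL _ ih => exact valid_boxGL ih

theorem satSeq_of_infStep {S : Set Sequent} (hS : ∀ Δ ∈ S, InfStep S Δ) {M : GLModel}
    {w : M.World} (hsucc : ∀ v, M.R w v → ∀ Δ ∈ S, M.SatSeq v Δ) (Δ : Sequent) (hΔ : Δ ∈ S) :
    M.SatSeq w Δ := by
  induction Δ using (wellFounded_lt.onFun (f := seqSize)).induction with
  | _ Δ ih =>
  rcases hS Δ hΔ with ⟨Δ, A, rfl⟩ | ⟨Δ, rfl⟩ | ⟨Δ, A, B, rfl, hA, hB⟩ | ⟨Δ, A, B, rfl, hAB⟩ |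
    ⟨Γ, Θ, A, rfl, hA⟩
  · exact satSeq_axA w A Δ
  · exact satSeq_cons.2 (.inl trivial)
  · exact satSeq_and.2
      ⟨ih _ (by simp [Function.onFun, Fml.size]) hA, ih _ (by simp [Function.onFun, Fml.size]) hB⟩
  · exact satSeq_or.2 (ih _ (by simp [Function.onFun, Fml.size]; omega) hAB)
  · exact (satSeq_box_diaS fun v hwv => hsucc v hwv _ hA).mono
      (Multiset.cons_le_cons _ (Multiset.le_add_right _ _))

theorem GLInf.valid {Γ : Sequent} (h : GLInf Γ) : Valid Γ := by
  obtain ⟨S, hΓ, hS⟩ := h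
  intro M w
  induction w using M.wf.induction generalizing Γ with
  | _ w ih => exact satSeq_of_infStep hS (fun v hwv _ hΔ => ih v hwv hΔ) Γ hΓ

inductive CircHistory : List Sequent → Prop
  | nil : CircHistory []
  | cons {Γ H} : GLCircAux H Γ → CircHistory H → CircHistory (Γ :: H)

def circSequents : Set Sequent := {Δ | ∃ H, CircHistory H ∧ GLCircAux H Δ}

theorem GLCircAux.infStep_or_mem {H : List Sequent} {Δ : Sequent} (hH : CircHistory H)
    (h : GLCircAux H Δ) : InfStep circSequents Δ ∨ Δ ∈ H := by
  cases h with
  | axA _ Δ A => exact .inl (.inl ⟨Δ, A, rfl⟩)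
  | axTop _ Δ => exact .inl (.inr (.inl ⟨Δ, rfl⟩))
  | back hmem => exact .inr hmem
  | andR hA hB =>
    exact .inl (.inr (.inr (.inl ⟨_, _, _, rfl, ⟨_, hH.cons (.andR hA hB), hA⟩,
      ⟨_, hH.cons (.andR hA hB), hB⟩⟩)))
  | orR hAB =>
    exact .inl (.inr (.inr (.inr (.inl ⟨_, _, _, rfl, ⟨_, hH.cons (.orR hAB), hAB⟩⟩))))
  | boxR hA =>
    exact .inl (.inr (.inr (.inr (.inr ⟨_, _, _, rfl, ⟨_, hH.cons (.boxR hA), hA⟩⟩))))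

/-- A back-link into the history is replaced by the derivation of its target, which lies
further down the history. -/
theorem CircHistory.infStep {H : List Sequent} (hH : CircHistory H) {Δ : Sequent}
    (h : GLCircAux H Δ) : InfStep circSequents Δ := by
  induction hH generalizing Δ with
  | nil => simpa using h.infStep_or_mem .nil
  | @cons Γ H hΓ hH ih =>
    rcases h.infStep_or_mem (hH.cons hΓ) with hstep | hmem
    · exact hstep
    rcases List.mem_cons.1 hmem with rfl | hmem
    · exact ih hΓ
    · exact ih (.back hmem)

theorem GLCirc.glInf {Γ : Sequent} (h : GLCirc Γ) : GLInf Γ :=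
  ⟨circSequents, ⟨[], .nil, h⟩, fun _ ⟨_, hH, hΔ⟩ => hH.infStep hΔ⟩

namespace GLModel

section RootedSum

variable {ι : Type} (Ms : ι → GLModel) (ws : ∀ i, (Ms i).World)

inductive RootedSumRel : Option (Σ i, (Ms i).World) → Option (Σ i, (Ms i).World) → Prop
  | root (i x) : (x = ws i ∨ (Ms i).R (ws i) x) → RootedSumRel none (some ⟨i, x⟩)
  | inner (i x y) : (Ms i).R x y → RootedSumRel (some ⟨i, x⟩) (some ⟨i, y⟩)

theorem acc_rootedSumRel (i : ι) (x : (Ms i).World) :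
    Acc (flip (RootedSumRel Ms ws)) (some ⟨i, x⟩) := by
  induction x using (Ms i).wf.induction with
  | _ x ih => exact ⟨_, fun _ h => by cases h with | inner _ _ y hxy => exact ih y hxy⟩

def rootedSum (v : ℕ → Prop) : GLModel where
  World := Option (Σ i, (Ms i).World)
  R := RootedSumRel Ms ws
  val
    | none => v
    | some ⟨i, x⟩ => (Ms i).val x
  trans := by
    rintro _ _ _ (⟨i, x, hx⟩ | ⟨i, x, y, hxy⟩) hbc <;> cases hbc with | inner _ _ z hyz => ?_
    · exact .root i z (.inr (hx.elim (· ▸ hyz) ((Ms i).trans · hyz)))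
    · exact .inner i x z ((Ms i).trans hxy hyz)
  wf := ⟨fun
    | none => ⟨_, fun _ h => by cases h with | root i x _ => exact acc_rootedSumRel Ms ws i x⟩
    | some ⟨i, x⟩ => acc_rootedSumRel Ms ws i x⟩

theorem sat_rootedSum (v : ℕ → Prop) (A : Fml) (i : ι) (x : (Ms i).World) :
    (rootedSum Ms ws v).Sat A (some ⟨i, x⟩) ↔ (Ms i).Sat A x := by
  induction A generalizing x with
  | and A B ihA ihB => exact and_congr (ihA x) (ihB x)
  | or A B ihA ihB => exact or_congr (ihA x) (ihB x)
  | box A ih =>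
    refine ⟨fun h y hxy => (ih y).1 (h _ (.inner i x y hxy)), fun h v hv => ?_⟩
    cases hv with | inner _ _ y hxy => exact (ih y).2 (h y hxy)
  | dia A ih =>
    refine ⟨fun ⟨v, hv, hA⟩ => ?_, fun ⟨y, hxy, hA⟩ => ⟨_, .inner i x y hxy, (ih y).2 hA⟩⟩
    cases hv with | inner _ _ y hxy => exact ⟨y, hxy, (ih y).1 hA⟩
  | _ => exact Iff.rfl

end RootedSum

end GLModel

/-- The countermodels of the □-premises, glued below a root refuting the literals of `Δ`. -/
theorem not_valid_of_saturated {Δ Γ : Sequent} (htop : .top ∉ Δ)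
    (hand : ∀ A B, .and A B ∉ Δ) (hor : ∀ A B, .or A B ∉ Δ)
    (hlit : ∀ n, .pos n ∈ Δ → .neg n ∉ Δ) (hΓ : ∀ B, .dia B ∈ Δ → B ∈ Γ)
    (hbox : ∀ A, .box A ∈ Δ → ¬ Valid (A ::ₘ (Γ + diaS Γ))) : ¬ Valid Δ := by
  have hcounter : ∀ i : {A // Fml.box A ∈ Δ},
      ∃ (M : GLModel) (w : M.World), ¬ M.SatSeq w (i.1 ::ₘ (Γ + diaS Γ)) := fun i => by
    simpa [Valid] using hbox i.1 i.2
  choose Ms ws hws using hcounter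
  intro hv
  obtain ⟨X, hX, hsat⟩ := hv (rootedSum Ms ws fun n => .pos n ∉ Δ) none
  cases X with
  | pos n => exact hsat hX
  | neg n => exact hlit n (not_not.1 hsat) hX
  | top => exact htop hX
  | bot => exact hsat
  | and A B => exact hand A B hX
  | or A B => exact hor A B hX
  | box A =>
    have hA := (sat_rootedSum Ms ws _ A _ _).1 (hsat _ (.root ⟨A, hX⟩ _ (.inl rfl)))
    exact hws ⟨A, hX⟩ (satSeq_cons.2 (.inl hA))
  | dia B =>
    obtain ⟨_, ⟨i, x, hx⟩, hB⟩ := hsat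
    rw [sat_rootedSum] at hB
    refine hws i (satSeq_cons.2 (.inr ?_))
    rcases hx with rfl | hx
    · exact ⟨B, Multiset.mem_add.2 (.inl (hΓ B hX)), hB⟩
    · exact ⟨.dia B, Multiset.mem_add.2 (.inr (Multiset.mem_map_of_mem _ (hΓ B hX))), x, hx, hB⟩

theorem exists_eq_diaS_add (Δ : Sequent) :
    ∃ Γ Θ, Γ.Nodup ∧ Δ = diaS Γ + Θ ∧ ∀ B, .dia B ∈ Δ → B ∈ Γ := by
  induction Δ using Multiset.induction with
  | empty => exact ⟨0, 0, Multiset.nodup_zero, by simp [diaS], by simp⟩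
  | cons X Δ ih =>
    obtain ⟨Γ, Θ, hΓ, rfl, hcov⟩ := ih
    by_cases hX : ∃ B, X = .dia B ∧ B ∉ Γ
    · obtain ⟨B, rfl, hB⟩ := hX
      refine ⟨B ::ₘ Γ, Θ, Multiset.nodup_cons.2 ⟨hB, hΓ⟩, by simp [diaS], fun C hC => ?_⟩
      rcases Multiset.mem_cons.1 hC with hC | hC
      · exact Multiset.mem_cons.2 (.inl (Fml.dia_injective hC))
      · exact Multiset.mem_cons_of_mem (hcov C hC)
    · refine ⟨Γ, X ::ₘ Θ, hΓ, by simp, fun C hC => ?_⟩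
      rcases Multiset.mem_cons.1 hC with rfl | hC
      · by_contra hCΓ
        exact hX ⟨C, rfl, hCΓ⟩
      · exact hcov C hC

theorem Valid.decompose {Δ : Sequent} (hv : Valid Δ) :
    (∃ Δ₀ A, Δ = A ::ₘ A.negation ::ₘ Δ₀) ∨ (∃ Δ₀, Δ = .top ::ₘ Δ₀) ∨
    (∃ Δ₀ A B, Δ = .and A B ::ₘ Δ₀ ∧ Valid (A ::ₘ Δ₀) ∧ Valid (B ::ₘ Δ₀)) ∨
    (∃ Δ₀ A B, Δ = .or A B ::ₘ Δ₀ ∧ Valid (A ::ₘ B ::ₘ Δ₀)) ∨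
    (∃ Γ Θ A, Γ.Nodup ∧ (∀ B, .dia B ∈ Δ → B ∈ Γ) ∧ Δ = .box A ::ₘ (diaS Γ + Θ) ∧
      Valid (A ::ₘ (Γ + diaS Γ))) := by
  by_cases hlit : ∃ n, .pos n ∈ Δ ∧ .neg n ∈ Δ
  · obtain ⟨n, hpos, hneg⟩ := hlit
    obtain ⟨Δ₁, rfl⟩ := Multiset.exists_cons_of_mem hpos
    obtain ⟨Δ₀, rfl⟩ := Multiset.exists_cons_of_mem ((Multiset.mem_cons.1 hneg).resolve_left nofun)
    exact .inl ⟨Δ₀, .pos n, rfl⟩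
  by_cases htop : .top ∈ Δ
  · exact .inr (.inl (Multiset.exists_cons_of_mem htop))
  by_cases hand : ∃ A B, .and A B ∈ Δ
  · obtain ⟨A, B, hAB⟩ := hand
    obtain ⟨Δ₀, rfl⟩ := Multiset.exists_cons_of_mem hAB
    exact .inr (.inr (.inl ⟨Δ₀, A, B, rfl, valid_and.1 hv⟩))
  by_cases hor : ∃ A B, .or A B ∈ Δ
  · obtain ⟨A, B, hAB⟩ := hor
    obtain ⟨Δ₀, rfl⟩ := Multiset.exists_cons_of_mem hAB
    exact .inr (.inr (.inr (.inl ⟨Δ₀, A, B, rfl, valid_or.1 hv⟩)))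
  push Not at hlit hand hor
  obtain ⟨Γ, Θ, hΓ, hΔ, hcov⟩ := exists_eq_diaS_add Δ
  obtain ⟨A, hA, hvA⟩ : ∃ A, .box A ∈ Δ ∧ Valid (A ::ₘ (Γ + diaS Γ)) := by
    by_contra! hbox
    exact not_valid_of_saturated htop hand hor hlit hcov hbox hv
  have hAΘ : .box A ∈ Θ := by
    rw [hΔ, Multiset.mem_add] at hA
    exact hA.resolve_left (by simp [diaS])
  obtain ⟨Θ₀, rfl⟩ := Multiset.exists_cons_of_mem hAΘ
  exact .inr (.inr (.inr (.inr ⟨Γ, Θ₀, A, hΓ, hcov, by rw [hΔ, Multiset.add_cons], hvA⟩)))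

namespace Fml

def subformulas : Fml → Finset Fml
  | .and A B => insert (.and A B) (A.subformulas ∪ B.subformulas)
  | .or A B => insert (.or A B) (A.subformulas ∪ B.subformulas)
  | .box A => insert (.box A) A.subformulas
  | .dia A => insert (.dia A) A.subformulas
  | A => {A}

theorem mem_subformulas_self (A : Fml) : A ∈ A.subformulas := by
  cases A <;> simp [subformulas]

theorem subformulas_subset {A B : Fml} (h : B ∈ A.subformulas) :
    B.subformulas ⊆ A.subformulas := by
  induction A <;> simp only [subformulas, Finset.mem_insert, Finset.mem_union,
    Finset.mem_singleton] at h <;> grind [subformulas]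

theorem subformulas_negation (A : Fml) : A.negation.subformulas = A.subformulas.image negation := by
  induction A <;> simp [negation, subformulas, Finset.image_insert, Finset.image_union, *]

end Fml

structure FLClosed (C : Finset Fml) : Prop where
  and_mem {A B : Fml} : .and A B ∈ C → A ∈ C ∧ B ∈ C
  or_mem {A B : Fml} : .or A B ∈ C → A ∈ C ∧ B ∈ C
  box_mem {A : Fml} : .box A ∈ C → A ∈ C ∧ .dia A.negation ∈ C
  dia_mem {A : Fml} : .dia A ∈ C → A ∈ C

theorem FLClosed.of_subformulas_negation {C : Finset Fml}
    (h : ∀ X ∈ C, X.subformulas ⊆ C ∧ X.negation ∈ C) : FLClosed C := by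
  have sub {X Y : Fml} (hX : X ∈ C) (hY : Y ∈ X.subformulas) : Y ∈ C := (h X hX).1 hY
  refine ⟨fun hX => ⟨sub hX ?_, sub hX ?_⟩, fun hX => ⟨sub hX ?_, sub hX ?_⟩,
    fun hX => ⟨sub hX ?_, (h _ hX).2⟩, fun hX => sub hX ?_⟩ <;>
  simp [Fml.subformulas, Fml.mem_subformulas_self]

theorem exists_flClosed (Γ : Sequent) : ∃ C, FLClosed C ∧ ∀ A ∈ Γ, A ∈ C := by
  refine ⟨Γ.toFinset.biUnion fun A => A.subformulas ∪ A.negation.subformulas,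
    .of_subformulas_negation fun X hX => ?_, fun A hA => ?_⟩
  · simp only [Finset.mem_biUnion, Finset.mem_union, Multiset.mem_toFinset] at hX
    obtain ⟨A, hA, hXA⟩ := hX
    refine ⟨fun Y hY => Finset.mem_biUnion.2 ⟨A, Multiset.mem_toFinset.2 hA, ?_⟩,
      Finset.mem_biUnion.2 ⟨A, Multiset.mem_toFinset.2 hA, ?_⟩⟩
    · rcases hXA with hXA | hXA
      exacts [Finset.mem_union_left _ (Fml.subformulas_subset hXA hY),
        Finset.mem_union_right _ (Fml.subformulas_subset hXA hY)]
    · rw [Fml.subformulas_negation] at hXA ⊢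
      rcases hXA with hXA | hXA
      · exact Finset.mem_union_right _ (Finset.mem_image_of_mem _ hXA)
      · obtain ⟨Y, hY, rfl⟩ := Finset.mem_image.1 hXA
        exact Finset.mem_union_left _ (by simpa using hY)
  · exact Finset.mem_biUnion.2 ⟨A, Multiset.mem_toFinset.2 hA,
      Finset.mem_union_left _ A.mem_subformulas_self⟩

/-- The GL-rule strictly shrinks this set: its premise keeps the ◇-formulas and gains `◇Ā`. -/
noncomputable def absentDia (C : Finset Fml) (Δ : Sequent) : Finset Fml :=
  (C.filter (· ∉ Δ)).preimage Fml.dia Fml.dia_injective.injOn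

theorem mem_absentDia {C : Finset Fml} {Δ : Sequent} {B : Fml} :
    B ∈ absentDia C Δ ↔ .dia B ∈ C ∧ .dia B ∉ Δ := by
  simp [absentDia]

theorem absentDia_subset {C : Finset Fml} {Δ Δ' : Sequent}
    (h : ∀ B, .dia B ∈ Δ → .dia B ∈ Δ') : absentDia C Δ' ⊆ absentDia C Δ := fun B hB =>
  mem_absentDia.2 ⟨(mem_absentDia.1 hB).1, fun hBΔ => (mem_absentDia.1 hB).2 (h B hBΔ)⟩

theorem absentDia_ssubset {C : Finset Fml} {Δ Δ' : Sequent} {B : Fml}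
    (h : ∀ B, .dia B ∈ Δ → .dia B ∈ Δ') (hC : .dia B ∈ C) (hBΔ' : .dia B ∈ Δ')
    (hBΔ : .dia B ∉ Δ) : absentDia C Δ' ⊂ absentDia C Δ :=
  (Finset.ssubset_iff_of_subset (absentDia_subset h)).2
    ⟨B, mem_absentDia.2 ⟨hC, hBΔ⟩, fun hB => (mem_absentDia.1 hB).2 hBΔ'⟩

theorem FLClosed.forall_mem_andPremises {C : Finset Fml} (hC : FLClosed C) {A B : Fml}
    {Δ : Sequent} (h : ∀ X ∈ .and A B ::ₘ Δ, X ∈ C) :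
    (∀ X ∈ A ::ₘ Δ, X ∈ C) ∧ ∀ X ∈ B ::ₘ Δ, X ∈ C := by
  simp only [Multiset.forall_mem_cons] at h ⊢
  exact ⟨⟨(hC.and_mem h.1).1, h.2⟩, (hC.and_mem h.1).2, h.2⟩

theorem FLClosed.forall_mem_orPremise {C : Finset Fml} (hC : FLClosed C) {A B : Fml}
    {Δ : Sequent} (h : ∀ X ∈ .or A B ::ₘ Δ, X ∈ C) : ∀ X ∈ A ::ₘ B ::ₘ Δ, X ∈ C := by
  simp only [Multiset.forall_mem_cons] at h ⊢
  exact ⟨(hC.or_mem h.1).1, (hC.or_mem h.1).2, h.2⟩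

theorem FLClosed.forall_mem_glPremise {C : Finset Fml} (hC : FLClosed C) {A : Fml}
    {Γ Θ : Sequent} (h : ∀ X ∈ .box A ::ₘ (diaS Γ + Θ), X ∈ C) :
    ∀ X ∈ A ::ₘ .dia A.negation ::ₘ (Γ + diaS Γ), X ∈ C := by
  have hΓ : ∀ B ∈ Γ, .dia B ∈ C := fun B hB => h _ (by simp [diaS, hB])
  simp only [Multiset.forall_mem_cons, Multiset.mem_add, diaS, Multiset.mem_map] at h ⊢
  refine ⟨(hC.box_mem h.1).1, (hC.box_mem h.1).2, ?_⟩
  rintro X (hX | ⟨B, hB, rfl⟩)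
  exacts [hC.dia_mem (hΓ X hX), hΓ B hB]

theorem GLSeq.of_negation_mem {A : Fml} {Δ : Sequent} (h : A.negation ∈ Δ) : GLSeq (A ::ₘ Δ) := by
  obtain ⟨Δ₀, rfl⟩ := Multiset.exists_cons_of_mem h
  exact .axA Δ₀ A

noncomputable def glSeqRank (C : Finset Fml) (Δ : Sequent) : ℕ ×ₗ ℕ :=
  toLex ((absentDia C Δ).card, seqSize Δ)

theorem glSeqRank_lt_of_seqSize_lt {C : Finset Fml} {Δ Δ' : Sequent}
    (h : ∀ B, .dia B ∈ Δ → .dia B ∈ Δ') (hsize : seqSize Δ' < seqSize Δ) :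
    glSeqRank C Δ' < glSeqRank C Δ :=
  Prod.Lex.toLex_lt_toLex.2 <|
    (Finset.card_le_card (absentDia_subset h)).lt_or_eq.imp id (⟨·, hsize⟩)

theorem glSeqRank_lt_of_ssubset {C : Finset Fml} {Δ Δ' : Sequent}
    (h : absentDia C Δ' ⊂ absentDia C Δ) : glSeqRank C Δ' < glSeqRank C Δ :=
  Prod.Lex.toLex_lt_toLex.2 (.inl (Finset.card_lt_card h))

theorem GLSeq.of_valid_of_flClosed {C : Finset Fml} (hC : FLClosed C) (Δ : Sequent)
    (hΔC : ∀ A ∈ Δ, A ∈ C) (hv : Valid Δ) : GLSeq Δ := by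
  induction Δ using (wellFounded_lt.onFun (f := glSeqRank C)).induction with
  | _ Δ ih =>
  rcases hv.decompose with ⟨Δ₀, A, rfl⟩ | ⟨Δ₀, rfl⟩ | ⟨Δ₀, A, B, rfl, hA, hB⟩ |
    ⟨Δ₀, A, B, rfl, hAB⟩ | ⟨Γ, Θ, A, -, hcov, rfl, hA⟩
  · exact .axA Δ₀ A
  · exact .axTop Δ₀
  · have ⟨hAC, hBC⟩ := hC.forall_mem_andPremises hΔC
    have hdia : ∀ X D, .dia D ∈ .and A B ::ₘ Δ₀ → .dia D ∈ X ::ₘ Δ₀ := fun _ _ hD =>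
      Multiset.mem_cons_of_mem (by simpa using hD)
    exact .andR
      (ih _ (glSeqRank_lt_of_seqSize_lt (hdia A) (by simp [Fml.size])) hAC hA)
      (ih _ (glSeqRank_lt_of_seqSize_lt (hdia B) (by simp [Fml.size])) hBC hB)
  · have hdia : ∀ D, .dia D ∈ .or A B ::ₘ Δ₀ → .dia D ∈ A ::ₘ B ::ₘ Δ₀ := fun _ hD =>
      Multiset.mem_cons_of_mem (Multiset.mem_cons_of_mem (by simpa using hD))
    exact .orR (ih _ (glSeqRank_lt_of_seqSize_lt hdia (by simp [Fml.size]; omega))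
      (hC.forall_mem_orPremise hΔC) hAB)
  · by_cases hdia : .dia A.negation ∈ .box A ::ₘ (diaS Γ + Θ)
    · exact .boxGL (.of_negation_mem (by simp [hcov _ hdia]))
    have hprem := hC.forall_mem_glPremise hΔC
    refine .boxGL (ih _ (glSeqRank_lt_of_ssubset (absentDia_ssubset (fun B hB => ?_)
      (hprem _ (by simp)) (by simp) hdia)) hprem
      (hA.mono (Multiset.cons_le_cons _ (Multiset.le_cons_self _ _))))
    simp [diaS, hcov B hB]

theorem GLSeq.of_valid {Γ : Sequent} (h : Valid Γ) : GLSeq Γ :=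
  let ⟨_, hC, hΓC⟩ := exists_flClosed Γ
  .of_valid_of_flClosed hC Γ hΓC h

theorem card_sdiff_cons_lt {T : Finset Sequent} {H : List Sequent} {Δ : Sequent} (hΔT : Δ ∈ T)
    (hΔH : Δ ∉ H) : (T \ (Δ :: H).toFinset).card < (T \ H.toFinset).card := by
  rw [List.toFinset_cons, Finset.sdiff_insert]
  exact Finset.card_erase_lt_of_mem (Finset.mem_sdiff.2 ⟨hΔT, by simpa using hΔH⟩)

/-- A finite ∞-proof folds into a circular one: along each branch a new sequent of `S` enters the
history at every step, so some sequent eventually repeats and becomes a back-link. -/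
theorem glCircAux_of_finite {S : Set Sequent} (hfin : S.Finite) (hS : ∀ Δ ∈ S, InfStep S Δ)
    (H : List Sequent) (Δ : Sequent) (hΔ : Δ ∈ S) : GLCircAux H Δ := by
  induction H using (wellFounded_lt.onFun
    (f := fun H : List Sequent => (hfin.toFinset \ H.toFinset).card)).induction generalizing Δ with
  | _ H ih =>
  by_cases hΔH : Δ ∈ H
  · exact .back hΔH
  have hlt := card_sdiff_cons_lt (hfin.mem_toFinset.2 hΔ) hΔH
  rcases hS Δ hΔ with ⟨Δ₀, A, rfl⟩ | ⟨Δ₀, rfl⟩ | ⟨Δ₀, A, B, rfl, hA, hB⟩ | ⟨Δ₀, A, B, rfl, hAB⟩ |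
    ⟨Γ, Θ, A, rfl, hA⟩
  · exact .axA H Δ₀ A
  · exact .axTop H Δ₀
  · exact .andR (ih _ hlt _ hA) (ih _ hlt _ hB)
  · exact .orR (ih _ hlt _ hAB)
  · exact .boxR (ih _ hlt _ hA)

theorem seqSize_boxPremise_le {C : Finset Fml} {A : Fml} {Γ : Sequent} (hΓ : Γ.Nodup)
    (h : ∀ X ∈ A ::ₘ (Γ + diaS Γ), X ∈ C) :
    seqSize (A ::ₘ (Γ + diaS Γ)) ≤ 3 * ∑ X ∈ C, X.size := by
  have hA := Finset.single_le_sum (f := Fml.size) (fun _ _ => Nat.zero_le _) (h A (by simp))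
  have hΓC := seqSize_le_sum_size hΓ fun B hB => h B (by simp [hB])
  have hdia : seqSize (diaS Γ) ≤ _ := seqSize_le_sum_size (hΓ.map Fml.dia_injective)
    fun B hB => h B (Multiset.mem_cons_of_mem (Multiset.mem_add.2 (.inr hB)))
  simp only [seqSize_cons, seqSize_add]
  omega

def boundedValid (C : Finset Fml) (K : ℕ) : Set Sequent :=
  {Δ | Valid Δ ∧ (∀ A ∈ Δ, A ∈ C) ∧ seqSize Δ ≤ K}

theorem le_nsmul_val {C : Finset Fml} {K : ℕ} {Δ : Sequent} (hΔC : ∀ A ∈ Δ, A ∈ C)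
    (hK : Multiset.card Δ ≤ K) : Δ ≤ K • C.val := by
  classical
  refine Multiset.le_iff_count.2 fun A => ?_
  by_cases hA : A ∈ Δ
  · rw [Multiset.count_nsmul, Multiset.count_eq_one_of_mem C.nodup (hΔC A hA), mul_one]
    exact (Multiset.count_le_card A Δ).trans hK
  · simp [Multiset.count_eq_zero_of_notMem hA]

theorem finite_boundedValid (C : Finset Fml) (K : ℕ) : (boundedValid C K).Finite :=
  (Set.finite_Iic (K • C.val)).subset fun _ ⟨_, hΔC, hsize⟩ =>
    le_nsmul_val hΔC ((card_le_seqSize _).trans hsize)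

theorem infStep_boundedValid {C : Finset Fml} (hC : FLClosed C) {K : ℕ}
    (hK : 3 * ∑ A ∈ C, A.size ≤ K) {Δ : Sequent} (hΔ : Δ ∈ boundedValid C K) :
    InfStep (boundedValid C K) Δ := by
  obtain ⟨hv, hΔC, hsize⟩ := hΔ
  rcases hv.decompose with ⟨Δ₀, A, rfl⟩ | ⟨Δ₀, rfl⟩ | ⟨Δ₀, A, B, rfl, hA, hB⟩ |
    ⟨Δ₀, A, B, rfl, hAB⟩ | ⟨Γ, Θ, A, hΓ, -, rfl, hA⟩
  · exact .inl ⟨Δ₀, A, rfl⟩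
  · exact .inr (.inl ⟨Δ₀, rfl⟩)
  · have ⟨hAC, hBC⟩ := hC.forall_mem_andPremises hΔC
    simp only [seqSize_cons, Fml.size] at hsize
    exact .inr (.inr (.inl ⟨Δ₀, A, B, rfl, ⟨hA, hAC, by simp; omega⟩, ⟨hB, hBC, by simp; omega⟩⟩))
  · simp only [seqSize_cons, Fml.size] at hsize
    exact .inr (.inr (.inr (.inl ⟨Δ₀, A, B, rfl, hAB, hC.forall_mem_orPremise hΔC,
      by simp; omega⟩)))
  · have hprem : ∀ X ∈ A ::ₘ (Γ + diaS Γ), X ∈ C := fun X hX =>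
      hC.forall_mem_glPremise hΔC X
        (Multiset.mem_of_le (Multiset.cons_le_cons _ (Multiset.le_cons_self _ _)) hX)
    exact .inr (.inr (.inr (.inr
      ⟨Γ, Θ, A, rfl, hA, hprem, (seqSize_boxPremise_le hΓ hprem).trans hK⟩)))

theorem GLCirc.of_valid {Γ : Sequent} (h : Valid Γ) : GLCirc Γ := by
  obtain ⟨C, hC, hΓC⟩ := exists_flClosed Γ
  exact glCircAux_of_finite (finite_boundedValid C (seqSize Γ + 3 * ∑ A ∈ C, A.size))
    (fun Δ => infStep_boundedValid hC (Nat.le_add_left _ _)) [] Γ ⟨h, hΓC, Nat.le_add_right _ _⟩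

theorem three_systems_equivalent (Γ : Sequent) :
    (GLSeq Γ ↔ GLInf Γ) ∧ (GLInf Γ ↔ GLCirc Γ) := by
  have hSeq : GLSeq Γ ↔ Valid Γ := ⟨GLSeq.valid, GLSeq.of_valid⟩
  have hInf : GLInf Γ ↔ Valid Γ := ⟨GLInf.valid, fun h => (GLCirc.of_valid h).glInf⟩
  have hCirc : GLCirc Γ ↔ Valid Γ := ⟨fun h => h.glInf.valid, GLCirc.of_valid⟩
  exact ⟨hSeq.trans hInf.symm, hInf.trans hCirc.symm⟩
end
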